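/- Let (Ω, F, P) be a probability space with a filtration (F_L)_{L∈ℕ}, and let Z_1, ..., Z_n be random variables measurable with respect to F_∞ = ∨_L F_L, with 0 < Z_i ≤ 1 almost surely for each i. Let B_1, ..., B_n > 0 be constants. For m ∈ ℕ set L(m) = ⌊√m⌋ and w_i^{(m)} = E[Z_i | F_{L(m)}]; define m_i(m) = max{ L(m), ⌊ m·√(B_i w_i^{(m)}) / ∑_{k=1}^n √(B_k w_k^{(m)}) ⌋ } for i = 1, ..., n−1, and m_n(m) = m − ∑_{i=1}^{n−1} m_i(m). Then for every i ∈ {1, ..., n}, m_i(m)/m → √(B_i Z_i) / ∑_{k=1}^n √(B_k Z_k) almost surely as m → ∞. -/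

import Mathlib

/-!
By Lévy's upward theorem `E[Z_i | F_L] → Z_i` almost surely, and `L(m) = ⌊√m⌋ → ∞`, so the
estimated weights `√(B_i w_i^{(m)})` converge to `√(B_i Z_i) > 0`. On such an `ω` everything is
deterministic: for `i < n` the floor costs at most `1/m` and the lower bound `L(m)` is `o(m)`, so
`m_i/m` tends to the target share; the last share converges because all shares sum to `1`.
-/

open MeasureTheory ProbabilityTheory Filter Finset Topology

lemma Nat.tendsto_sqrt_atTop : Tendsto Nat.sqrt atTop atTop :=
  tendsto_atTop_atTop.2 fun b => ⟨b * b, fun _ hm => Nat.le_sqrt.2 hm⟩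

lemma tendsto_natSqrt_div_atTop : Tendsto (fun m : ℕ => (Nat.sqrt m : ℝ) / m) atTop (𝓝 0) := by
  have hinv : Tendsto (fun m : ℕ => 1 / (Nat.sqrt m : ℝ)) atTop (𝓝 0) :=
    tendsto_one_div_atTop_nhds_zero_nat.comp Nat.tendsto_sqrt_atTop
  refine tendsto_of_tendsto_of_tendsto_of_le_of_le' tendsto_const_nhds hinv
    (Eventually.of_forall fun m => by positivity) ?_
  filter_upwards [eventually_ge_atTop 1] with m hm
  have hs : (0 : ℝ) < Nat.sqrt m := by exact_mod_cast Nat.sqrt_pos.2 hm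
  have hss : (Nat.sqrt m : ℝ) * Nat.sqrt m ≤ m := by exact_mod_cast Nat.sqrt_le m
  calc (Nat.sqrt m : ℝ) / m ≤ Nat.sqrt m / (Nat.sqrt m * Nat.sqrt m) :=
        div_le_div_of_nonneg_left hs.le (by positivity) hss
    _ = 1 / Nat.sqrt m := by field_simp

lemma tendsto_floor_mul_div_of_tendsto {r : ℕ → ℝ} {s : ℝ} (hr : Tendsto r atTop (𝓝 s)) :
    Tendsto (fun m : ℕ => (⌊(m : ℝ) * r m⌋ : ℝ) / m) atTop (𝓝 s) := by
  have hlow : Tendsto (fun m : ℕ => r m - 1 / m) atTop (𝓝 s) := by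
    simpa using hr.sub tendsto_one_div_atTop_nhds_zero_nat
  refine tendsto_of_tendsto_of_tendsto_of_le_of_le' hlow hr ?_ ?_ <;>
    filter_upwards [eventually_gt_atTop 0] with m hm <;>
    have hm : (0 : ℝ) < m := Nat.cast_pos.2 hm
  · calc r m - 1 / m = ((m : ℝ) * r m - 1) / m := by field_simp
      _ ≤ (⌊(m : ℝ) * r m⌋ : ℝ) / m :=
        div_le_div_of_nonneg_right (Int.sub_one_lt_floor _).le hm.le
  · calc (⌊(m : ℝ) * r m⌋ : ℝ) / m ≤ (m : ℝ) * r m / m :=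
        div_le_div_of_nonneg_right (Int.floor_le _) hm.le
      _ = r m := mul_div_cancel_left₀ _ hm.ne'

lemma tendsto_max_div_natCast {a b : ℕ → ℝ} {s : ℝ}
    (ha : Tendsto (fun m => a m / m) atTop (𝓝 0)) (hb : Tendsto (fun m => b m / m) atTop (𝓝 s))
    (hs : 0 ≤ s) : Tendsto (fun m => max (a m) (b m) / m) atTop (𝓝 s) := by
  have h := ha.max hb
  rw [max_eq_right hs] at h
  exact h.congr fun m => max_div_div_right (Nat.cast_nonneg m) _ _

lemma tendsto_apply_of_sum_eq_one {α ι : Type*} [Fintype ι] [DecidableEq ι] {l : Filter α}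
    {x : α → ι → ℝ} {p : ι → ℝ} (j : ι) (hx : ∀ᶠ a in l, ∑ i, x a i = 1) (hp : ∑ i, p i = 1)
    (h : ∀ i ≠ j, Tendsto (fun a => x a i) l (𝓝 (p i))) :
    Tendsto (fun a => x a j) l (𝓝 (p j)) := by
  have hpj : p j = 1 - ∑ i ∈ univ.erase j, p i := by
    rw [← hp, ← add_sum_erase _ _ (mem_univ j), add_sub_cancel_right]
  rw [hpj]
  refine (tendsto_const_nhds.sub <|
    tendsto_finsetSum _ fun i hi => h i (ne_of_mem_erase hi)).congr' ?_
  filter_upwards [hx] with a ha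
  rw [← ha, ← add_sum_erase _ _ (mem_univ j), add_sub_cancel_right]

lemma Fin.filter_val_lt_eq_erase_last (n : ℕ) :
    univ.filter (fun i : Fin (n + 1) => (i : ℕ) < n) = univ.erase (Fin.last n) := by
  rw [← filter_ne']
  exact filter_congr fun i _ => by rw [← Fin.lt_last_iff_ne_last, Fin.lt_def, Fin.val_last]

section Allocation

variable {n : ℕ} {ℓ : ℕ → ℕ} {a : ℕ → Fin (n + 1) → ℝ} {a' : Fin (n + 1) → ℝ}
  {alloc : ℕ → Fin (n + 1) → ℤ}

lemma tendsto_alloc_div_of_lt (hℓ : Tendsto (fun m => (ℓ m : ℝ) / m) atTop (𝓝 0))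
    (ha : ∀ k, Tendsto (fun m => a m k) atTop (𝓝 (a' k))) (ha' : ∀ k, 0 < a' k)
    (hAlloc : ∀ m (i : Fin (n + 1)), (i : ℕ) < n →
      alloc m i = max (ℓ m : ℤ) ⌊(m : ℝ) * a m i / ∑ k, a m k⌋)
    {i : Fin (n + 1)} (hi : (i : ℕ) < n) :
    Tendsto (fun m => (alloc m i : ℝ) / m) atTop (𝓝 (a' i / ∑ k, a' k)) := by
  have hsum : 0 < ∑ k, a' k := sum_pos (fun k _ => ha' k) univ_nonempty
  have hshare : Tendsto (fun m => a m i / ∑ k, a m k) atTop (𝓝 (a' i / ∑ k, a' k)) :=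
    (ha i).div (tendsto_finsetSum _ fun k _ => ha k) hsum.ne'
  refine (tendsto_max_div_natCast hℓ (tendsto_floor_mul_div_of_tendsto hshare)
    (div_pos (ha' i) hsum).le).congr fun m => ?_
  rw [hAlloc m i hi, mul_div_assoc]
  push_cast
  rfl

lemma sum_alloc_eq (hAllocLast : ∀ m, alloc m (Fin.last n) =
      (m : ℤ) - ∑ i ∈ univ.filter (fun i : Fin (n + 1) => (i : ℕ) < n), alloc m i) (m : ℕ) :
    ∑ i, alloc m i = m := by
  rw [← add_sum_erase _ _ (mem_univ (Fin.last n)), hAllocLast, Fin.filter_val_lt_eq_erase_last,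
    sub_add_cancel]

theorem tendsto_alloc_div (hℓ : Tendsto (fun m => (ℓ m : ℝ) / m) atTop (𝓝 0))
    (ha : ∀ k, Tendsto (fun m => a m k) atTop (𝓝 (a' k))) (ha' : ∀ k, 0 < a' k)
    (hAlloc : ∀ m (i : Fin (n + 1)), (i : ℕ) < n →
      alloc m i = max (ℓ m : ℤ) ⌊(m : ℝ) * a m i / ∑ k, a m k⌋)
    (hAllocLast : ∀ m, alloc m (Fin.last n) =
      (m : ℤ) - ∑ i ∈ univ.filter (fun i : Fin (n + 1) => (i : ℕ) < n), alloc m i)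
    (i : Fin (n + 1)) :
    Tendsto (fun m => (alloc m i : ℝ) / m) atTop (𝓝 (a' i / ∑ k, a' k)) := by
  have hlt : ∀ j ≠ Fin.last n, Tendsto (fun m => (alloc m j : ℝ) / m) atTop
      (𝓝 (a' j / ∑ k, a' k)) := fun j hj =>
    tendsto_alloc_div_of_lt hℓ ha ha' hAlloc (Fin.lt_def.1 (Fin.lt_last_iff_ne_last.2 hj))
  rcases eq_or_ne i (Fin.last n) with rfl | hi
  · refine tendsto_apply_of_sum_eq_one _ ?_ ?_ hlt
    · filter_upwards [eventually_gt_atTop 0] with m hm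
      rw [← sum_div, div_eq_one_iff_eq (Nat.cast_pos.2 hm).ne']
      exact_mod_cast sum_alloc_eq hAllocLast m
    · rw [← sum_div, div_self (sum_pos (fun k _ => ha' k) univ_nonempty).ne']
  · exact hlt i hi

end Allocation

/-- Lemma 4.2.1: in the hybrid design for a parallel-series system, the subsystem sample
sizes satisfy `m i (m) / m → √(B i · Z i) / ∑ √(B k · Z k)` almost surely. -/
theorem hybrid_allocation_as {Ω : Type*} {mΩ : MeasurableSpace Ω} (P : Measure Ω)
    [IsProbabilityMeasure P] (F : ℕ → MeasurableSpace Ω)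
    (hFmono : Monotone F) (hFle : ∀ L, F L ≤ mΩ)
    (n : ℕ) (Z : Fin (n + 1) → Ω → ℝ)
    (hZmeas : ∀ i, Measurable[⨆ L, F L] (Z i))
    (hZ : ∀ i, ∀ᵐ ω ∂P, Z i ω ∈ Set.Ioc (0 : ℝ) 1)
    (B : Fin (n + 1) → ℝ) (hB : ∀ i, 0 < B i)
    (alloc : ℕ → Fin (n + 1) → Ω → ℤ)
    (hAlloc : ∀ m (ω : Ω) (i : Fin (n + 1)), (i : ℕ) < n →
      alloc m i ω = max (Nat.sqrt m : ℤ)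
        ⌊(m : ℝ) * Real.sqrt (B i * (P[Z i | F (Nat.sqrt m)]) ω) /
          ∑ k, Real.sqrt (B k * (P[Z k | F (Nat.sqrt m)]) ω)⌋)
    (hAllocLast : ∀ m (ω : Ω),
      alloc m (Fin.last n) ω =
        (m : ℤ) - ∑ i ∈ Finset.univ.filter (fun i : Fin (n + 1) => (i : ℕ) < n),
          alloc m i ω) :
    ∀ i, ∀ᵐ ω ∂P, Tendsto (fun m => (alloc m i ω : ℝ) / m) atTop
      (nhds (Real.sqrt (B i * Z i ω) / ∑ k, Real.sqrt (B k * Z k ω))) := by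
  intro i
  let ℱ : Filtration ℕ mΩ := ⟨F, hFmono, hFle⟩
  have hZint : ∀ k, Integrable (Z k) P := fun k =>
    .of_mem_Icc 0 1 ((hZmeas k).mono (iSup_le hFle) le_rfl).aemeasurable <| by
      filter_upwards [hZ k] with ω hω using Set.Ioc_subset_Icc_self hω
  have hLevy : ∀ᵐ ω ∂P, ∀ k, Tendsto (fun L => (P[Z k | F L]) ω) atTop (𝓝 (Z k ω)) :=
    ae_all_iff.2 fun k => (hZint k).tendsto_ae_condExp (ℱ := ℱ) (hZmeas k).stronglyMeasurable
  filter_upwards [hLevy, ae_all_iff.2 hZ] with ω hconv hpos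
  exact tendsto_alloc_div tendsto_natSqrt_div_atTop
    (fun k => (((hconv k).comp Nat.tendsto_sqrt_atTop).const_mul (B k)).sqrt)
    (fun k => Real.sqrt_pos.2 (mul_pos (hB k) (hpos k).1))
    (fun m j hj => hAlloc m ω j hj) (fun m => hAllocLast m ω) i
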